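/- arXiv:1501.04131 — 3 statements merged into one kernel-verified Lean document; each statement's English description precedes it below -/
import Mathlib

section
/- Let T be a finite tree with a designated root and strictly positive conductances g_e > 0 on its edges. Let L be the reduced weighted graph Laplacian, the square matrix indexed by the non-root vertices defined by L(a,a) = Σ_{c : {a,c} is an edge of T} g_{ac} (the sum over all neighbors c of a, including the root if adjacent), L(a,b) = -g_{ab} if {a,b} is an edge of T with a ≠ b, and L(a,b) = 0 otherwise. Then L is invertible and its inverse is the path-sum matrix K_{1/g}, i.e., L^{-1}(a,b) = Σ_{e ∈ E_a ∩ E_b} 1/g_e, the sum of the inverse conductances of the edges common to the paths from a and from b to the root. -/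
open Classical

/-- A finite tree with a designated root vertex (the slack bus). -/
structure GridTree (V : Type*) [Fintype V] [DecidableEq V] where
  graph : SimpleGraph V
  root : V
  isTree : graph.IsTree

namespace GridTree

variable {V : Type*} [Fintype V] [DecidableEq V] (T : GridTree V)

/-- The unique path (as a walk) from a vertex to the root. -/
noncomputable def pathToRoot (a : V) : T.graph.Walk a T.root :=
  (T.isTree.existsUnique_path a T.root).choose

/-- `E_a`: the set of edges on the unique path from `a` to the root. -/
noncomputable def pathEdges (a : V) : Finset (Sym2 V) :=
  (T.pathToRoot a).edges.toFinset

/-- `c` is a descendant of `a`: `a` lies on the unique path from `c` to the root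
(in particular every vertex is a descendant of itself). -/
def Descendant (c a : V) : Prop := a ∈ (T.pathToRoot c).support

/-- `b` is the parent of `a`: the edge `{a, b}` lies on the path from `a` to the root
(equivalently, `b` is the unique neighbor of `a` on that path). -/
noncomputable def IsParent (a b : V) : Prop := s(a, b) ∈ T.pathEdges a

/-- The path-sum matrix `K_w`, indexed by the non-root vertices:
`K_w(a,b) = ∑_{e ∈ E_a ∩ E_b} w_e`. -/
noncomputable def pathMatrix (w : Sym2 V → ℝ) :
    Matrix {v : V // v ≠ T.root} {v : V // v ≠ T.root} ℝ :=
  fun a b => ∑ e ∈ T.pathEdges a.1 ∩ T.pathEdges b.1, w e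

/-- The reduced weighted graph Laplacian with edge weights `w`, indexed by the
non-root vertices (the row and column of the root are deleted). -/
noncomputable def lap (w : Sym2 V → ℝ) :
    Matrix {v : V // v ≠ T.root} {v : V // v ≠ T.root} ℝ :=
  fun a b =>
    if a = b then ∑ c ∈ Finset.univ.filter (fun c => T.graph.Adj a.1 c), w s(a.1, c)
    else if T.graph.Adj a.1 b.1 then - w s(a.1, b.1) else 0

end GridTree

/-! Index each edge of the tree by its endpoint farther from the root. With `B` the signed
incidence matrix, `G` the diagonal matrix of conductances and `P c a = 1` iff `c` lies on the path
from `a` to the root, one has `L = B G Bᵀ` and `K_{1/g} = Pᵀ G⁻¹ P`. Since the path from `a` is `a`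
followed by the path from its parent, `P B = 1`; hence `L K_{1/g} = B G (P B)ᵀ G⁻¹ P = B P = 1`. -/

open SimpleGraph Matrix

theorem Matrix.mul_mul_transpose_mul_transpose_mul_mul_eq_one {n R : Type*} [Fintype n]
    [DecidableEq n] [CommRing R] {B P D D' : Matrix n n R} (hPB : P * B = 1) (hD : D * D' = 1) :
    B * D * Bᵀ * (Pᵀ * D' * P) = 1 :=
  calc B * D * Bᵀ * (Pᵀ * D' * P) = B * D * (P * B)ᵀ * D' * P := by
        simp only [transpose_mul, Matrix.mul_assoc]
    _ = B * P := by
        rw [hPB, transpose_one, Matrix.mul_one, Matrix.mul_assoc B, hD, Matrix.mul_one]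
    _ = 1 := mul_eq_one_comm.mp hPB

namespace GridTree

variable {V : Type*} [Fintype V] [DecidableEq V] (T : GridTree V)

lemma isPath_pathToRoot (a : V) : (T.pathToRoot a).IsPath :=
  (T.isTree.existsUnique_path a T.root).choose_spec.1

lemma eq_pathToRoot {a : V} {p : T.graph.Walk a T.root} (hp : p.IsPath) :
    p = T.pathToRoot a :=
  (T.isTree.existsUnique_path a T.root).choose_spec.2 p hp

lemma pathToRoot_root : T.pathToRoot T.root = .nil :=
  (T.eq_pathToRoot .nil).symm

/-- The parent of a vertex; the root is its own parent. -/
noncomputable def par (a : V) : V := (T.pathToRoot a).getVert 1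

noncomputable def parentEdge (a : V) : Sym2 V := s(a, T.par a)

lemma ne_root_and_par_eq_of_pathToRoot_eq_cons {a c : V} {h : T.graph.Adj a c}
    {q : T.graph.Walk c T.root} (hq : T.pathToRoot a = .cons h q) :
    a ≠ T.root ∧ T.par a = c := by
  refine ⟨?_, by simp [par, hq]⟩
  rintro rfl
  simpa [T.pathToRoot_root] using congrArg Walk.length hq

lemma pathToRoot_eq_cons {a : V} (ha : a ≠ T.root) :
    ∃ h : T.graph.Adj a (T.par a), T.pathToRoot a = .cons h (T.pathToRoot (T.par a)) := by
  obtain ⟨c, h, q, hq⟩ := (T.pathToRoot a).exists_eq_cons_of_ne ha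
  obtain rfl := (T.ne_root_and_par_eq_of_pathToRoot_eq_cons hq).2
  have hq_path : q.IsPath := by
    have := T.isPath_pathToRoot a
    rw [hq, Walk.cons_isPath_iff] at this
    exact this.1
  exact ⟨h, hq.trans (by rw [T.eq_pathToRoot hq_path])⟩

lemma adj_par {a : V} (ha : a ≠ T.root) : T.graph.Adj a (T.par a) :=
  (T.pathToRoot_eq_cons ha).1

lemma length_pathToRoot_par_lt {a : V} (ha : a ≠ T.root) :
    (T.pathToRoot (T.par a)).length < (T.pathToRoot a).length := by
  obtain ⟨h, hq⟩ := T.pathToRoot_eq_cons ha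
  rw [hq, Walk.length_cons]
  exact Nat.lt_succ_self _

lemma support_pathToRoot {a : V} (ha : a ≠ T.root) :
    (T.pathToRoot a).support = a :: (T.pathToRoot (T.par a)).support := by
  obtain ⟨h, hq⟩ := T.pathToRoot_eq_cons ha
  rw [hq, Walk.support_cons]

lemma pathEdges_of_ne_root {a : V} (ha : a ≠ T.root) :
    T.pathEdges a = insert (T.parentEdge a) (T.pathEdges (T.par a)) := by
  obtain ⟨h, hq⟩ := T.pathToRoot_eq_cons ha
  rw [pathEdges, pathEdges, hq, Walk.edges_cons, List.toFinset_cons, parentEdge]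

lemma pathEdges_root : T.pathEdges T.root = ∅ := by
  simp [pathEdges, T.pathToRoot_root]

@[elab_as_elim]
lemma induction_par {motive : V → Prop} (root : motive T.root)
    (step : ∀ a, a ≠ T.root → motive (T.par a) → motive a) (a : V) : motive a := by
  induction h : (T.pathToRoot a).length using Nat.strong_induction_on generalizing a with
  | _ n ih =>
    by_cases ha : a = T.root
    · exact ha ▸ root
    · exact step a ha (ih _ (h ▸ T.length_pathToRoot_par_lt ha) _ rfl)

lemma descendant_root_iff {c : V} : T.Descendant T.root c ↔ c = T.root := by
  simp [Descendant, T.pathToRoot_root]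

lemma descendant_iff {a : V} (ha : a ≠ T.root) (c : V) :
    T.Descendant a c ↔ c = a ∨ T.Descendant (T.par a) c := by
  rw [Descendant, Descendant, T.support_pathToRoot ha, List.mem_cons]

lemma not_descendant_par {a : V} (ha : a ≠ T.root) : ¬ T.Descendant (T.par a) a := by
  obtain ⟨h, hq⟩ := T.pathToRoot_eq_cons ha
  have := T.isPath_pathToRoot a
  rw [hq, Walk.cons_isPath_iff] at this
  exact this.2

lemma parentEdge_mem_edgeSet {a : V} (ha : a ≠ T.root) : T.parentEdge a ∈ T.graph.edgeSet :=
  T.adj_par ha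

lemma mem_pathEdges_iff (a : V) {e : Sym2 V} :
    e ∈ T.pathEdges a ↔ ∃ c, c ≠ T.root ∧ T.Descendant a c ∧ T.parentEdge c = e := by
  induction a using T.induction_par with
  | root => simp [T.pathEdges_root, T.descendant_root_iff]
  | step a ha ih =>
    simp only [T.pathEdges_of_ne_root ha, Finset.mem_insert, ih, T.descendant_iff ha]
    constructor
    · rintro (rfl | ⟨c, hc, hd, rfl⟩)
      exacts [⟨a, ha, Or.inl rfl, rfl⟩, ⟨c, hc, Or.inr hd, rfl⟩]
    · rintro ⟨c, hc, rfl | hd, rfl⟩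
      exacts [Or.inl rfl, Or.inr ⟨c, hc, hd, rfl⟩]

lemma par_par_ne {a : V} (ha : a ≠ T.root) (hpa : T.par a ≠ T.root) : T.par (T.par a) ≠ a := by
  intro h
  have h₁ := T.length_pathToRoot_par_lt ha
  have h₂ := T.length_pathToRoot_par_lt hpa
  rw [h] at h₂
  omega

lemma parentEdge_injOn : Set.InjOn T.parentEdge {c | c ≠ T.root} := by
  intro c hc d hd h
  rcases Sym2.eq_iff.mp h with ⟨rfl, -⟩ | ⟨rfl, hpar⟩
  · rfl
  · exact absurd hpar (T.par_par_ne hd (hpar ▸ hc))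

lemma parentEdge_mem_pathEdges_iff {c : V} (hc : c ≠ T.root) (a : V) :
    T.parentEdge c ∈ T.pathEdges a ↔ T.Descendant a c := by
  rw [T.mem_pathEdges_iff]
  refine ⟨fun ⟨d, hd, hda, hdc⟩ => ?_, fun h => ⟨c, hc, h, rfl⟩⟩
  rwa [T.parentEdge_injOn hd hc hdc] at hda

lemma adj_iff (a c : V) :
    T.graph.Adj a c ↔ (a ≠ T.root ∧ T.par a = c) ∨ (c ≠ T.root ∧ T.par c = a) := by
  refine ⟨fun h => ?_, ?_⟩
  · by_cases hc : c ∈ (T.pathToRoot a).support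
    · left
      have hsingle : (T.pathToRoot a).takeUntil c hc = .cons h .nil :=
        (T.isTree.existsUnique_path a c).unique ((T.isPath_pathToRoot a).takeUntil hc)
          (by simp [h.ne])
      have hspec := (T.pathToRoot a).take_spec hc
      rw [hsingle, Walk.cons_append, Walk.nil_append] at hspec
      exact T.ne_root_and_par_eq_of_pathToRoot_eq_cons hspec.symm
    · right
      have hpath : (Walk.cons h.symm (T.pathToRoot a)).IsPath :=
        (Walk.cons_isPath_iff _ _).mpr ⟨T.isPath_pathToRoot a, hc⟩
      exact T.ne_root_and_par_eq_of_pathToRoot_eq_cons (T.eq_pathToRoot hpath).symm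
  · rintro (⟨ha, rfl⟩ | ⟨hc, rfl⟩)
    exacts [T.adj_par ha, (T.adj_par hc).symm]

/-- `1 - T.parentMatrix` is the signed vertex-edge incidence matrix of `T`, the edge
`T.parentEdge c` being indexed by its lower endpoint `c`. -/
noncomputable def parentMatrix : Matrix {v : V // v ≠ T.root} {v : V // v ≠ T.root} ℝ :=
  fun v c => if T.par c.1 = v.1 then 1 else 0

noncomputable def descendantMatrix : Matrix {v : V // v ≠ T.root} {v : V // v ≠ T.root} ℝ :=
  fun c a => if T.Descendant a.1 c.1 then 1 else 0

lemma descendantMatrix_mul_parentMatrix_apply (c a : {v : V // v ≠ T.root}) :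
    (T.descendantMatrix * T.parentMatrix) c a = if T.Descendant (T.par a.1) c.1 then 1 else 0 := by
  simp only [mul_apply, descendantMatrix, parentMatrix, mul_ite, mul_one, mul_zero]
  by_cases hpa : T.par a.1 = T.root
  · rw [hpa, if_neg (by simpa [T.descendant_root_iff] using c.2)]
    exact Finset.sum_eq_zero fun v _ => if_neg (Ne.symm v.2)
  · rw [Finset.sum_eq_single ⟨T.par a.1, hpa⟩, if_pos rfl]
    · exact fun v _ hv => if_neg fun h => hv (Subtype.ext h.symm)
    · exact fun h => absurd (Finset.mem_univ _) h

lemma descendantMatrix_mul_one_sub_parentMatrix :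
    T.descendantMatrix * (1 - T.parentMatrix) = 1 := by
  ext c a
  rw [Matrix.mul_sub, Matrix.mul_one, Matrix.sub_apply, descendantMatrix_mul_parentMatrix_apply,
    descendantMatrix, one_apply, T.descendant_iff a.2]
  by_cases hca : c = a
  · simp [hca, T.not_descendant_par a.2]
  · simp [hca, Subtype.val_inj]

lemma pathMatrix_eq (w : Sym2 V → ℝ) :
    T.pathMatrix w =
      T.descendantMatrixᵀ * diagonal (fun c => w (T.parentEdge c.1)) * T.descendantMatrix := by
  ext a b
  rw [mul_apply]
  simp only [mul_diagonal, transpose_apply, descendantMatrix, pathMatrix, ite_mul,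
    one_mul, zero_mul, mul_ite, mul_one, mul_zero, ← ite_and, ← Finset.sum_filter]
  symm
  refine Finset.sum_nbij (fun c => T.parentEdge c.1) ?_ ?_ ?_ (fun _ _ => rfl)
  · intro c hc
    simp only [Finset.mem_filter, Finset.mem_univ, true_and] at hc
    simp only [Finset.mem_inter, T.parentEdge_mem_pathEdges_iff c.2]
    exact hc.symm
  · exact fun c _ d _ h => Subtype.ext (T.parentEdge_injOn c.2 d.2 h)
  · intro e he
    rw [Finset.coe_inter, Set.mem_inter_iff, Finset.mem_coe, Finset.mem_coe] at he
    obtain ⟨c, hc, hac, rfl⟩ := (T.mem_pathEdges_iff a).mp he.1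
    have hbc := (T.parentEdge_mem_pathEdges_iff hc b).mp he.2
    exact ⟨⟨c, hc⟩, by simp [hac, hbc], rfl⟩

lemma sum_neighbors_eq {a : V} (ha : a ≠ T.root) (w : Sym2 V → ℝ) :
    ∑ c ∈ Finset.univ.filter (fun c => T.graph.Adj a c), w s(a, c) =
      w (T.parentEdge a) +
        ∑ c : {v : V // v ≠ T.root}, if T.par c.1 = a then w (T.parentEdge c.1) else 0 := by
  have hsplit : ∀ c, (if T.graph.Adj a c then w s(a, c) else 0) =
      (if T.par a = c then w s(a, c) else 0) +
        (if c ≠ T.root ∧ T.par c = a then w (T.parentEdge c) else 0) := by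
    intro c
    rw [T.adj_iff]
    by_cases h₁ : T.par a = c
    · have h₂ : ¬ (c ≠ T.root ∧ T.par c = a) := fun h => T.par_par_ne ha (h₁ ▸ h.1) (h₁ ▸ h.2)
      simp [ha, h₁, h₂]
    · simp only [ha, h₁, ne_eq, and_false, false_or, if_false, zero_add]
      split_ifs with h
      · rw [parentEdge, h.2, Sym2.eq_swap]
      · rfl
  rw [Finset.sum_filter, Finset.sum_congr rfl fun c _ => hsplit c, Finset.sum_add_distrib,
    Finset.sum_ite_eq, if_pos (Finset.mem_univ _), Fintype.sum_eq_add_sum_subtype_ne _ T.root]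
  simp only [ne_eq, not_true_eq_false, false_and, if_false, zero_add]
  exact congrArg _ (Finset.sum_congr rfl fun c _ => by simp [c.2])

lemma parentMatrix_mul_diagonal_mul_transpose_apply (d : {v : V // v ≠ T.root} → ℝ)
    (a b : {v : V // v ≠ T.root}) :
    (T.parentMatrix * diagonal d * T.parentMatrixᵀ) a b =
      if a = b then ∑ c, if T.par c.1 = a.1 then d c else 0 else 0 := by
  rw [mul_apply]
  simp only [mul_diagonal, transpose_apply, parentMatrix, ite_mul, one_mul, zero_mul, mul_ite,
    mul_one, mul_zero]
  split_ifs with hab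
  · subst hab
    simp only [← ite_and, and_self]
  · refine Finset.sum_eq_zero fun c _ => ?_
    split_ifs with hb ha
    · exact absurd (Subtype.ext (ha.symm.trans hb)) hab
    all_goals rfl

lemma lap_eq (w : Sym2 V → ℝ) :
    T.lap w = (1 - T.parentMatrix) * diagonal (fun c => w (T.parentEdge c.1)) *
      (1 - T.parentMatrix)ᵀ := by
  set A := T.parentMatrix
  set D := diagonal (fun c : {v : V // v ≠ T.root} => w (T.parentEdge c.1))
  have hexpand : (1 - A) * D * (1 - A)ᵀ = D - A * D - D * Aᵀ + A * D * Aᵀ := by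
    simp only [transpose_sub, transpose_one, Matrix.sub_mul, Matrix.mul_sub, Matrix.one_mul,
      Matrix.mul_one]
    abel
  ext a b
  rw [hexpand, Matrix.add_apply, Matrix.sub_apply, Matrix.sub_apply,
    parentMatrix_mul_diagonal_mul_transpose_apply]
  simp only [D, A, mul_diagonal, diagonal_mul, diagonal_apply, transpose_apply, parentMatrix, lap,
    ite_mul, one_mul, zero_mul, mul_ite, mul_one, mul_zero]
  by_cases hab : a = b
  · subst hab
    simp [T.sum_neighbors_eq a.2, (T.adj_par a.2).ne.symm]
  · simp only [hab, if_false, T.adj_iff, a.2, b.2, ne_eq, not_false_eq_true, true_and]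
    by_cases hpa : T.par a.1 = b.1
    · have hpb : T.par b.1 ≠ a.1 := fun h => T.par_par_ne a.2 (hpa ▸ b.2) (hpa ▸ h)
      simp [hpa, hpb, parentEdge]
    · by_cases hpb : T.par b.1 = a.1
      · simp [hpa, hpb, parentEdge, Sym2.eq_swap]
      · simp [hpa, hpb]

end GridTree

/-- For a rooted tree with strictly positive conductances `g` on its
edges, the reduced weighted graph Laplacian `L` is invertible and its inverse is the
path-sum matrix with weights `1/g`: `L⁻¹(a,b) = ∑_{e ∈ E_a ∩ E_b} 1/g_e`. -/
theorem tree_laplacian_inverse_is_pathMatrix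
    {V : Type*} [Fintype V] [DecidableEq V] (T : GridTree V)
    (g : Sym2 V → ℝ) (hg : ∀ e ∈ T.graph.edgeSet, 0 < g e) :
    T.lap g * T.pathMatrix (fun e => (g e)⁻¹) = 1 ∧
    T.pathMatrix (fun e => (g e)⁻¹) * T.lap g = 1 := by
  have hD : diagonal (fun c : {v : V // v ≠ T.root} => g (T.parentEdge c.1)) *
      diagonal (fun c => (g (T.parentEdge c.1))⁻¹) = 1 := by
    rw [diagonal_mul_diagonal, ← diagonal_one]
    exact congrArg diagonal (funext fun c =>
      mul_inv_cancel₀ (hg _ (T.parentEdge_mem_edgeSet c.2)).ne')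
  have hLK : T.lap g * T.pathMatrix (fun e => (g e)⁻¹) = 1 := by
    rw [T.lap_eq, T.pathMatrix_eq]
    exact mul_mul_transpose_mul_transpose_mul_mul_eq_one
      T.descendantMatrix_mul_one_sub_parentMatrix hD
  exact ⟨hLK, mul_eq_one_comm.mp hLK⟩
end

section
/- Let F be a finite forest whose connected components are trees T_1, …, T_K, each containing exactly one designated root vertex, and let g_e > 0 be strictly positive conductances on the edges of F. Let L be the reduced weighted graph Laplacian, the square matrix indexed by all non-root vertices of F defined by L(a,a) = Σ_{c : {a,c} is an edge of F} g_{ac}, L(a,b) = -g_{ab} if {a,b} is an edge of F with a ≠ b, and L(a,b) = 0 otherwise. Then L is invertible, and: (i) L^{-1}(a,b) = 0 whenever a and b lie in different trees of F; (ii) if a and b lie in the same tree T_k, then L^{-1}(a,b) = Σ_{e ∈ E_a ∩ E_b} 1/g_e, the sum of the inverse conductances of the edges common to the paths from a and from b to the root of T_k. -/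
open Classical

/-- A finite forest each of whose connected components contains exactly one
designated root vertex (slack bus). -/
structure GridForest (V : Type*) [Fintype V] [DecidableEq V] where
  graph : SimpleGraph V
  isAcyclic : graph.IsAcyclic
  isRoot : V → Prop
  exists_unique_root : ∀ v : V, ∃! r : V, isRoot r ∧ graph.Reachable v r

namespace GridForest

variable {V : Type*} [Fintype V] [DecidableEq V] (F : GridForest V)

/-- The root of the tree (connected component) containing `v`. -/
noncomputable def rootOf (v : V) : V := (F.exists_unique_root v).choose

/-- The unique path from `v` to the root of its tree. -/
noncomputable def pathToRoot (v : V) : F.graph.Path v (F.rootOf v) :=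
  ((F.exists_unique_root v).choose_spec.1.2.some).toPath

/-- `E_v`: the set of edges on the unique path from `v` to the root of its tree. -/
noncomputable def pathEdges (v : V) : Finset (Sym2 V) :=
  (F.pathToRoot v).1.edges.toFinset

/-- The reduced weighted graph Laplacian with edge weights `w`, indexed by the
non-root vertices (rows and columns of all roots are deleted). -/
noncomputable def lap (w : Sym2 V → ℝ) :
    Matrix {v : V // ¬ F.isRoot v} {v : V // ¬ F.isRoot v} ℝ :=
  fun a b =>
    if a = b then ∑ c ∈ Finset.univ.filter (fun c => F.graph.Adj a.1 c), w s(a.1, c)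
    else if F.graph.Adj a.1 b.1 then - w s(a.1, b.1) else 0

end GridForest

/-! Orient each edge towards the root and label it by its lower endpoint, so that edges and
non-root vertices correspond. If `N` is the resulting square incidence matrix and `D` the
diagonal matrix of conductances, then `L = Nᵀ D N`. Since the path from `c` to the root is `c`
followed by the path from its parent, `N` is inverted by the ancestor matrix `P`
(`P a c = 1` iff `c` lies on the path from `a` to the root). Hence `L⁻¹ = P D⁻¹ Pᵀ`, and the
`(a, b)` entry of `P D⁻¹ Pᵀ` sums `1 / g` over the edges leaving common ancestors of `a` and `b`,
that is, over `E_a ∩ E_b`; vertices in different trees have no common ancestor. -/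

open Matrix in
theorem Matrix.transpose_mul_diagonal_mul_mul_eq_one {n K : Type*} [Fintype n] [DecidableEq n]
    [Field K] {N P : Matrix n n K} (hNP : N * P = 1) {d : n → K} (hd : ∀ i, d i ≠ 0) :
    Nᵀ * diagonal d * N * (P * diagonal d⁻¹ * Pᵀ) = 1 := by
  have hPN : P * N = 1 := mul_eq_one_comm.mp hNP
  have hdd : diagonal d * diagonal d⁻¹ = 1 := by
    rw [diagonal_mul_diagonal, ← diagonal_one]
    exact congrArg diagonal (funext fun i => mul_inv_cancel₀ (hd i))
  calc Nᵀ * diagonal d * N * (P * diagonal d⁻¹ * Pᵀ)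
      = Nᵀ * (diagonal d * (N * P) * diagonal d⁻¹) * Pᵀ := by simp only [Matrix.mul_assoc]
    _ = (P * N)ᵀ := by rw [hNP, Matrix.mul_one, hdd, Matrix.mul_one, transpose_mul]
    _ = 1 := by rw [hPN, transpose_one]

namespace GridForest

open SimpleGraph

variable {V : Type*} [Fintype V] [DecidableEq V] {F : GridForest V}

abbrev NonRoot (F : GridForest V) := {v : V // ¬ F.isRoot v}

lemma isRoot_rootOf (F : GridForest V) (v : V) : F.isRoot (F.rootOf v) :=
  (F.exists_unique_root v).choose_spec.1.1

lemma rootOf_eq {v r : V} (hr : F.isRoot r) (h : F.graph.Reachable v r) : F.rootOf v = r :=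
  ((F.exists_unique_root v).choose_spec.2 r ⟨hr, h⟩).symm

lemma pathToRoot_eq {u : V} {q : F.graph.Walk u (F.rootOf u)} (hq : q.IsPath) :
    (F.pathToRoot u).1 = q :=
  have := F.isAcyclic.subsingleton_path u (F.rootOf u)
  congrArg Subtype.val (Subsingleton.elim (F.pathToRoot u) ⟨q, hq⟩)

lemma support_pathToRoot_eq {u r : V} {q : F.graph.Walk u r} (hq : q.IsPath)
    (hr : F.isRoot r) : (F.pathToRoot u).1.support = q.support := by
  obtain rfl := rootOf_eq hr q.reachable
  rw [pathToRoot_eq hq]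

lemma edges_pathToRoot_eq {u r : V} {q : F.graph.Walk u r} (hq : q.IsPath)
    (hr : F.isRoot r) : (F.pathToRoot u).1.edges = q.edges := by
  obtain rfl := rootOf_eq hr q.reachable
  rw [pathToRoot_eq hq]

lemma support_pathToRoot_of_isRoot {r : V} (hr : F.isRoot r) :
    (F.pathToRoot r).1.support = [r] :=
  support_pathToRoot_eq Walk.IsPath.nil hr

lemma edges_pathToRoot_of_isRoot {r : V} (hr : F.isRoot r) :
    (F.pathToRoot r).1.edges = [] :=
  edges_pathToRoot_eq Walk.IsPath.nil hr

-- For a root `r` this is the junk value `par r = r`.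
noncomputable def par (F : GridForest V) (v : V) : V := (F.pathToRoot v).1.snd

lemma not_nil_pathToRoot {v : V} (hv : ¬ F.isRoot v) : ¬ (F.pathToRoot v).1.Nil :=
  Walk.not_nil_of_ne fun h => hv (h ▸ F.isRoot_rootOf v)

lemma adj_par {v : V} (hv : ¬ F.isRoot v) : F.graph.Adj v (F.par v) :=
  Walk.adj_snd (not_nil_pathToRoot hv)

lemma support_pathToRoot_of_not_isRoot {v : V} (hv : ¬ F.isRoot v) :
    (F.pathToRoot v).1.support = v :: (F.pathToRoot (F.par v)).1.support := by
  rw [support_pathToRoot_eq (u := F.par v) (F.pathToRoot v).2.tail (F.isRoot_rootOf v)]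
  exact (Walk.cons_support_tail (not_nil_pathToRoot hv)).symm

lemma edges_pathToRoot_of_not_isRoot {v : V} (hv : ¬ F.isRoot v) :
    (F.pathToRoot v).1.edges = s(v, F.par v) :: (F.pathToRoot (F.par v)).1.edges := by
  rw [edges_pathToRoot_eq (u := F.par v) (F.pathToRoot v).2.tail (F.isRoot_rootOf v)]
  conv_lhs => rw [← Walk.cons_tail_eq _ (not_nil_pathToRoot hv)]
  rfl

lemma notMem_support_pathToRoot_par {v : V} (hv : ¬ F.isRoot v) :
    v ∉ (F.pathToRoot (F.par v)).1.support := by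
  have hpath := (F.pathToRoot v).2
  rw [← Walk.cons_tail_eq _ (not_nil_pathToRoot hv), Walk.cons_isPath_iff] at hpath
  rw [support_pathToRoot_eq (u := F.par v) (F.pathToRoot v).2.tail (F.isRoot_rootOf v)]
  exact hpath.2

lemma length_pathToRoot_par_lt {v : V} (hv : ¬ F.isRoot v) :
    (F.pathToRoot (F.par v)).1.length < (F.pathToRoot v).1.length := by
  simp only [← Walk.length_edges, edges_pathToRoot_of_not_isRoot hv, List.length_cons,
    Nat.lt_succ_self]

theorem induction_on_par {P : V → Prop} (root : ∀ r, F.isRoot r → P r)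
    (step : ∀ v, ¬ F.isRoot v → P (F.par v) → P v) (v : V) : P v := by
  by_cases hv : F.isRoot v
  · exact root v hv
  · exact step v hv (induction_on_par root step (F.par v))
termination_by (F.pathToRoot v).1.length
decreasing_by exact length_pathToRoot_par_lt hv

lemma par_eq_of_isPath {v u r : V} (h : F.graph.Adj v u) {q : F.graph.Walk u r}
    (hq : (Walk.cons h q).IsPath) (hr : F.isRoot r) : F.par v = u := by
  obtain rfl := rootOf_eq hr (Walk.cons h q).reachable
  simp [par, pathToRoot_eq hq]

lemma par_par_ne {v : V} (hv : ¬ F.isRoot v) (hpv : ¬ F.isRoot (F.par v)) :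
    F.par (F.par v) ≠ v := by
  intro h
  apply notMem_support_pathToRoot_par hpv
  rw [h, support_pathToRoot_of_not_isRoot hv]
  exact List.mem_cons_of_mem _ (Walk.start_mem_support _)

lemma par_eq_or_eq_par_of_adj {a c : V} (h : F.graph.Adj a c) :
    F.par a = c ∨ (¬ F.isRoot c ∧ F.par c = a) := by
  by_cases hc : a ∈ (F.pathToRoot c).1.support
  · have hcr : ¬ F.isRoot c := fun hr => by
      rw [support_pathToRoot_of_isRoot hr, List.mem_singleton] at hc
      exact h.ne hc
    -- in a forest the only path from `c` to its neighbour `a` is the edge itself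
    have := F.isAcyclic.subsingleton_path c a
    have htake : (F.pathToRoot c).1.takeUntil a hc = Walk.cons h.symm Walk.nil :=
      congrArg Subtype.val (Subsingleton.elim
        ⟨_, (F.pathToRoot c).2.takeUntil hc⟩ (Path.singleton h.symm))
    have hpath := (F.pathToRoot c).2
    rw [← Walk.take_spec _ hc, htake, Walk.cons_append, Walk.nil_append] at hpath
    exact Or.inr ⟨hcr, par_eq_of_isPath h.symm hpath (F.isRoot_rootOf c)⟩
  · exact Or.inl (par_eq_of_isPath h ((F.pathToRoot c).2.cons hc) (F.isRoot_rootOf c))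

lemma adj_iff_eq_par_or_par_eq {a c : V} (ha : ¬ F.isRoot a) :
    F.graph.Adj a c ↔ c = F.par a ∨ (¬ F.isRoot c ∧ F.par c = a) := by
  refine ⟨fun h => (par_eq_or_eq_par_of_adj h).imp_left Eq.symm, ?_⟩
  rintro (rfl | ⟨hc, rfl⟩)
  exacts [adj_par ha, (adj_par hc).symm]

noncomputable def parentEdge (F : GridForest V) (c : F.NonRoot) : Sym2 V := s(c.1, F.par c.1)

lemma parentEdge_injective : Function.Injective F.parentEdge := by
  intro c c' h
  rcases Sym2.eq_iff.mp h with ⟨h, -⟩ | ⟨h₁, h₂⟩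
  · exact Subtype.ext h
  · exact absurd (by rw [← h₁, h₂]) (par_par_ne c'.2 (h₁ ▸ c.2))

lemma mem_edges_pathToRoot_iff (a : V) (e : Sym2 V) :
    e ∈ (F.pathToRoot a).1.edges ↔
      ∃ c : F.NonRoot, c.1 ∈ (F.pathToRoot a).1.support ∧ F.parentEdge c = e := by
  induction a using induction_on_par (F := F) with
  | root r hr =>
    simp only [edges_pathToRoot_of_isRoot hr, support_pathToRoot_of_isRoot hr]
    simpa using fun h => absurd hr h
  | step v hv ih =>
    simp only [edges_pathToRoot_of_not_isRoot hv, support_pathToRoot_of_not_isRoot hv,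
      List.mem_cons, ih, or_and_right, exists_or]
    refine or_congr_left ⟨fun he => ⟨⟨v, hv⟩, rfl, he.symm⟩, ?_⟩
    rintro ⟨c, rfl, rfl⟩
    rfl

lemma pathEdges_eq_image (a : V) :
    F.pathEdges a = Finset.image F.parentEdge {c | c.1 ∈ (F.pathToRoot a).1.support} := by
  ext e
  simp [pathEdges, mem_edges_pathToRoot_iff]

lemma disjoint_pathEdges_of_not_reachable {a b : V} (h : ¬ F.graph.Reachable a b) :
    Disjoint (F.pathEdges a) (F.pathEdges b) := by
  rw [Finset.disjoint_left]
  intro e ha hb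
  induction e using Sym2.ind with
  | h x y =>
    simp only [pathEdges, List.mem_toFinset] at ha hb
    have reach (v : V) (hv : s(x, y) ∈ (F.pathToRoot v).1.edges) : F.graph.Reachable v x :=
      ((F.pathToRoot v).1.takeUntil x (Walk.fst_mem_support_of_mem_edges _ hv)).reachable
    exact h ((reach a ha).trans (reach b hb).symm)

section Matrices

open Matrix

variable (F)

/-- `1 - F.parentMatrix` is the incidence matrix of `F` with the roots' columns deleted, the row
of the edge `F.parentEdge c` being indexed by `c`. -/
noncomputable def parentMatrix : Matrix F.NonRoot F.NonRoot ℝ :=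
  fun c a => if a.1 = F.par c.1 then 1 else 0

noncomputable def ancestorMatrix : Matrix F.NonRoot F.NonRoot ℝ :=
  fun a c => if c.1 ∈ (F.pathToRoot a.1).1.support then 1 else 0

variable {F}

lemma parentMatrix_mul_ancestorMatrix_apply (c a : F.NonRoot) :
    (F.parentMatrix * F.ancestorMatrix) c a =
      if a.1 ∈ (F.pathToRoot (F.par c.1)).1.support then 1 else 0 := by
  rw [mul_apply]
  by_cases hp : F.isRoot (F.par c.1)
  · rw [support_pathToRoot_of_isRoot hp, if_neg (fun h => a.2 (by rwa [List.mem_singleton.mp h]))]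
    refine Finset.sum_eq_zero fun x _ => ?_
    rw [parentMatrix, if_neg (fun h => x.2 (by rwa [h])), zero_mul]
  · rw [Finset.sum_eq_single ⟨F.par c.1, hp⟩]
    · simp [parentMatrix, ancestorMatrix]
    · intro x _ hx
      rw [parentMatrix, if_neg (fun h => hx (Subtype.ext h)), zero_mul]
    · simp

lemma one_sub_parentMatrix_mul_ancestorMatrix :
    (1 - F.parentMatrix) * F.ancestorMatrix = 1 := by
  ext c a
  rw [sub_mul, one_mul, Matrix.sub_apply, parentMatrix_mul_ancestorMatrix_apply, ancestorMatrix,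
    support_pathToRoot_of_not_isRoot c.2, one_apply]
  by_cases hca : c = a
  · subst hca
    simp [notMem_support_pathToRoot_par c.2]
  · have : a.1 ≠ c.1 := fun h => hca (Subtype.ext h.symm)
    simp [this, hca]

lemma sum_filter_adj_eq {a : V} (ha : ¬ F.isRoot a) (f : V → ℝ) :
    ∑ c ∈ Finset.univ.filter (fun c => F.graph.Adj a c), f c =
      f (F.par a) + ∑ c : F.NonRoot, if F.par c.1 = a then f c.1 else 0 := by
  have hfilter : Finset.univ.filter (fun c => F.graph.Adj a c) = insert (F.par a)
      ((Finset.univ.filter (fun c : F.NonRoot => F.par c.1 = a)).map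
        (Function.Embedding.subtype _)) := by
    ext c
    simp [adj_iff_eq_par_or_par_eq ha, and_comm]
  rw [hfilter, Finset.sum_insert, Finset.sum_map, Finset.sum_filter]
  · rfl
  · simpa using fun h => not_not.mp fun hpa => par_par_ne ha hpa h

lemma transpose_parentMatrix_mul_diagonal_mul_parentMatrix_apply (w : F.NonRoot → ℝ)
    (a b : F.NonRoot) :
    (F.parentMatrixᵀ * diagonal w * F.parentMatrix) a b =
      if a = b then ∑ c : F.NonRoot, if F.par c.1 = a.1 then w c else 0 else 0 := by
  rw [mul_apply]
  simp only [mul_diagonal, transpose_apply, parentMatrix]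
  split_ifs with hab
  · subst hab
    refine Finset.sum_congr rfl fun c _ => ?_
    by_cases h : a.1 = F.par c.1 <;> simp [h, eq_comm]
  · refine Finset.sum_eq_zero fun c _ => ?_
    by_cases ha : a.1 = F.par c.1
    · have hb : b.1 ≠ F.par c.1 := fun hb => hab (Subtype.ext (ha.trans hb.symm))
      simp [hb]
    · simp [ha]

lemma lap_eq_transpose_mul_diagonal_mul (g : Sym2 V → ℝ) :
    F.lap g = (1 - F.parentMatrix)ᵀ * diagonal (g ∘ F.parentEdge) * (1 - F.parentMatrix) := by
  set A := F.parentMatrix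
  set D := diagonal (g ∘ F.parentEdge)
  have hexpand : (1 - A)ᵀ * D * (1 - A) = D - D * A - Aᵀ * D + Aᵀ * D * A := by
    simp only [transpose_sub, transpose_one, sub_mul, mul_sub, one_mul, mul_one]
    abel
  rw [hexpand]
  ext a b
  simp only [Matrix.sub_apply, Matrix.add_apply, diagonal_apply, mul_diagonal, diagonal_mul,
    transpose_apply, A, D, transpose_parentMatrix_mul_diagonal_mul_parentMatrix_apply, lap,
    Function.comp_apply, parentEdge, parentMatrix]
  rcases eq_or_ne a b with rfl | hab
  · simp only [↓reduceIte, if_neg (adj_par a.2).ne, mul_zero, zero_mul, sub_zero]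
    rw [sum_filter_adj_eq a.2]
    refine congrArg (_ + ·) (Finset.sum_congr rfl fun c _ => ?_)
    split_ifs with h
    · rw [h, Sym2.eq_swap]
    · rfl
  · simp only [if_neg hab, zero_sub, add_zero]
    by_cases h₁ : b.1 = F.par a.1
    · have h₂ : a.1 ≠ F.par b.1 := fun h₂ => par_par_ne a.2 (h₁ ▸ b.2) (h₁ ▸ h₂).symm
      rw [if_pos ((adj_iff_eq_par_or_par_eq a.2).2 (Or.inl h₁)), if_pos h₁, if_neg h₂, h₁]
      ring
    by_cases h₂ : a.1 = F.par b.1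
    · rw [if_pos ((adj_iff_eq_par_or_par_eq a.2).2 (Or.inr ⟨b.2, h₂.symm⟩)), if_neg h₁,
        if_pos h₂, h₂, Sym2.eq_swap (a := F.par b.1)]
      ring
    · rw [if_neg (by rw [adj_iff_eq_par_or_par_eq a.2]; tauto), if_neg h₁, if_neg h₂]
      ring

lemma ancestorMatrix_mul_diagonal_mul_transpose_apply (f : Sym2 V → ℝ) (a b : F.NonRoot) :
    (F.ancestorMatrix * diagonal (f ∘ F.parentEdge) * F.ancestorMatrixᵀ) a b =
      ∑ e ∈ F.pathEdges a.1 ∩ F.pathEdges b.1, f e := by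
  rw [pathEdges_eq_image, pathEdges_eq_image, ← Finset.image_inter _ _ parentEdge_injective,
    Finset.sum_image parentEdge_injective.injOn, ← Finset.filter_and, Finset.sum_filter, mul_apply]
  refine Finset.sum_congr rfl fun c _ => ?_
  simp only [mul_diagonal, transpose_apply, ancestorMatrix, Function.comp_apply]
  split_ifs <;> simp_all

lemma lap_mul_eq_one {g : Sym2 V → ℝ} (hg : ∀ e ∈ F.graph.edgeSet, g e ≠ 0) :
    F.lap g * (F.ancestorMatrix * diagonal (g⁻¹ ∘ F.parentEdge) * F.ancestorMatrixᵀ) = 1 := by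
  rw [lap_eq_transpose_mul_diagonal_mul]
  exact transpose_mul_diagonal_mul_mul_eq_one one_sub_parentMatrix_mul_ancestorMatrix
    fun c => hg _ (adj_par c.2)

lemma inv_lap_apply {g : Sym2 V → ℝ} (hg : ∀ e ∈ F.graph.edgeSet, g e ≠ 0) (a b : F.NonRoot) :
    (F.lap g)⁻¹ a b = ∑ e ∈ F.pathEdges a.1 ∩ F.pathEdges b.1, (g e)⁻¹ := by
  rw [inv_eq_right_inv (lap_mul_eq_one hg), ancestorMatrix_mul_diagonal_mul_transpose_apply]
  rfl

end Matrices

end GridForest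

/-- For a rooted forest with strictly positive conductances `g` on its
edges, the reduced weighted Laplacian `L` is invertible; `L⁻¹(a,b) = 0` whenever `a`
and `b` lie in different trees, and `L⁻¹(a,b) = ∑_{e ∈ E_a ∩ E_b} 1/g_e` whenever `a`
and `b` lie in the same tree. -/
theorem forest_laplacian_inverse
    {V : Type*} [Fintype V] [DecidableEq V] (F : GridForest V)
    (g : Sym2 V → ℝ) (hg : ∀ e ∈ F.graph.edgeSet, 0 < g e) :
    IsUnit (F.lap g) ∧
    ∀ a b : {v : V // ¬ F.isRoot v},
      (¬ F.graph.Reachable a.1 b.1 → (F.lap g)⁻¹ a b = 0) ∧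
      (F.graph.Reachable a.1 b.1 →
        (F.lap g)⁻¹ a b = ∑ e ∈ F.pathEdges a.1 ∩ F.pathEdges b.1, (g e)⁻¹) := by
  have hg' : ∀ e ∈ F.graph.edgeSet, g e ≠ 0 := fun e he => (hg e he).ne'
  refine ⟨(Matrix.isUnit_iff_isUnit_det _).mpr
      (Matrix.isUnit_det_of_right_inverse (GridForest.lap_mul_eq_one hg')),
    fun a b => ⟨fun hab => ?_, fun _ => GridForest.inv_lap_apply hg' a b⟩⟩
  rw [GridForest.inv_lap_apply hg', Finset.disjoint_iff_inter_eq_empty.mp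
    (GridForest.disjoint_pathEdges_of_not_reachable hab), Finset.sum_empty]
end

section
/- Let G be a finite simple graph with edge parameters r_e, x_e ∈ ℝ satisfying r_e^2 + x_e^2 > 0 for every edge e, and define the conductance g_e = r_e/(r_e^2 + x_e^2) and susceptance β_e = x_e/(r_e^2 + x_e^2). Let θ and ε be real functions on the vertices, and for each ordered pair (a,b) with {a,b} an edge, define the directed active and reactive line flows P_{a→b} = β_{ab}(θ_a - θ_b) + g_{ab}(ε_a - ε_b) and Q_{a→b} = -g_{ab}(θ_a - θ_b) + β_{ab}(ε_a - ε_b). Then for every edge {a,b}: (i) the flows are antisymmetric, P_{a→b} = -P_{b→a} and Q_{a→b} = -Q_{b→a}; (ii) the LinDistFlow voltage-drop relation holds, ε_a - ε_b = r_{ab} P_{a→b} + x_{ab} Q_{a→b}; and (iii) the phase-drop relation holds, θ_a - θ_b = x_{ab} P_{a→b} - r_{ab} Q_{a→b}. Consequently, voltages and flows of any solution of the Linear Coupled power-flow equations p_a = Σ_{b:{a,b} edge} P_{a→b}, q_a = Σ_{b:{a,b} edge} Q_{a→b} satisfy the LinDistFlow equations. -/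
open Classical

/-- For the Linear Coupled power-flow line flows
`P_{a→b} = β_{ab}(θ_a - θ_b) + g_{ab}(ε_a - ε_b)` and
`Q_{a→b} = -g_{ab}(θ_a - θ_b) + β_{ab}(ε_a - ε_b)`, where
`g_e = r_e/(r_e² + x_e²)` and `β_e = x_e/(r_e² + x_e²)` with `r_e² + x_e² > 0`,
the flows on every edge are antisymmetric, and the LinDistFlow voltage-drop and
phase-drop relations hold:
`ε_a - ε_b = r_{ab} P_{a→b} + x_{ab} Q_{a→b}` and
`θ_a - θ_b = x_{ab} P_{a→b} - r_{ab} Q_{a→b}`.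
Consequently any solution of the LC-PF equations satisfies LinDistFlow. -/
theorem lcpf_flows_antisymmetric_and_lindistflow
    {V : Type*} (G : SimpleGraph V)
    (r x g β : Sym2 V → ℝ)
    (hrx : ∀ e ∈ G.edgeSet, 0 < (r e) ^ 2 + (x e) ^ 2)
    (hg : ∀ e, g e = r e / ((r e) ^ 2 + (x e) ^ 2))
    (hβ : ∀ e, β e = x e / ((r e) ^ 2 + (x e) ^ 2))
    (θ ε : V → ℝ) (P Q : V → V → ℝ)
    (hP : ∀ a b, G.Adj a b →
      P a b = β s(a, b) * (θ a - θ b) + g s(a, b) * (ε a - ε b))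
    (hQ : ∀ a b, G.Adj a b →
      Q a b = - g s(a, b) * (θ a - θ b) + β s(a, b) * (ε a - ε b)) :
    ∀ a b, G.Adj a b →
      P a b = - P b a ∧ Q a b = - Q b a ∧
      ε a - ε b = r s(a, b) * P a b + x s(a, b) * Q a b ∧
      θ a - θ b = x s(a, b) * P a b - r s(a, b) * Q a b := by
  intro a b hab
  have hswap : s(b, a) = s(a, b) := Sym2.eq_swap
  have hpos : 0 < (r s(a, b)) ^ 2 + (x s(a, b)) ^ 2 :=
    hrx _ (G.mem_edgeSet.mpr hab)
  have hne : (r s(a, b)) ^ 2 + (x s(a, b)) ^ 2 ≠ 0 := ne_of_gt hpos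
  rw [hP a b hab, hQ a b hab, hP b a hab.symm, hQ b a hab.symm, hswap,
    hg s(a, b), hβ s(a, b)]
  refine ⟨by ring, by ring, ?_, ?_⟩ <;> field_simp <;> ring
end
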